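/- arXiv:0708.2500 — 7 statements merged into one kernel-verified Lean document; each statement's English description precedes it below -/
import Mathlib

section
/- For any two positive integers k, m with k - 1 < m, we have ∑_{r=0}^{m} (-1)^r * C(m-k+r, k-1) * C(m, r) = 0, where C denotes the binomial coefficient (with C(a,b) = 0 if a < 0 or a < b). -/
open Finset

lemma diff_step (m : ℕ) (f : ℕ → ℤ) :
    ∑ r ∈ range (m + 2), (-1 : ℤ) ^ r * (m + 1).choose r * f r
      = ∑ r ∈ range (m + 1), (-1 : ℤ) ^ r * m.choose r * (f r - f (r + 1)) := by
  have hA : ∑ r ∈ range (m + 2), (-1 : ℤ) ^ r * (m + 1).choose r * f r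
      = (∑ r ∈ range (m + 1), ((-1 : ℤ) ^ (r + 1) * m.choose r * f (r + 1)
          + (-1 : ℤ) ^ (r + 1) * m.choose (r + 1) * f (r + 1))) + f 0 := by
    rw [Finset.sum_range_succ' (fun r => (-1 : ℤ) ^ r * (m + 1).choose r * f r) (m + 1)]
    simp only [Nat.choose_succ_succ]
    push_cast
    congr 1
    · apply Finset.sum_congr rfl; intros; ring
    · simp
  have hB : (∑ r ∈ range (m + 1), (-1 : ℤ) ^ (r + 1) * m.choose (r + 1) * f (r + 1)) + f 0
      = ∑ r ∈ range (m + 1), (-1 : ℤ) ^ r * m.choose r * f r := by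
    have h1 := Finset.sum_range_succ' (fun r => (-1 : ℤ) ^ r * m.choose r * f r) (m + 1)
    have h2 := Finset.sum_range_succ (fun r => (-1 : ℤ) ^ r * m.choose r * f r) (m + 1)
    simp only [Nat.choose_succ_self, Nat.cast_zero, pow_zero, Nat.choose_zero_right,
      Nat.cast_one, one_mul, mul_zero, zero_mul, add_zero] at h1 h2
    rw [h2] at h1
    linarith [h1]
  rw [hA, Finset.sum_add_distrib, add_assoc, hB]
  rw [show (∑ r ∈ range (m + 1), (-1 : ℤ) ^ r * m.choose r * (f r - f (r + 1)))
      = ∑ r ∈ range (m + 1), ((-1 : ℤ) ^ r * m.choose r * f r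
          - (-1 : ℤ) ^ r * m.choose r * f (r + 1)) from Finset.sum_congr rfl (by intros; ring)]
  rw [Finset.sum_sub_distrib]
  have : ∑ r ∈ range (m + 1), (-1 : ℤ) ^ (r + 1) * m.choose r * f (r + 1)
      = -∑ r ∈ range (m + 1), (-1 : ℤ) ^ r * m.choose r * f (r + 1) := by
    rw [← Finset.sum_neg_distrib]; apply Finset.sum_congr rfl; intros; ring
  rw [this]; ring

lemma key : ∀ (j m n : ℕ), j < m →
    ∑ r ∈ range (m + 1), (-1 : ℤ) ^ r * m.choose r * ((n + r).choose j) = 0 := by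
  intro j
  induction j with
  | zero =>
      intro m n hm
      obtain ⟨m', rfl⟩ := Nat.exists_eq_add_of_lt hm
      have := diff_step (0 + m') (fun r => ((n + r).choose 0 : ℤ))
      simpa using this
  | succ j ih =>
      intro m n hm
      obtain ⟨m', rfl⟩ := Nat.exists_eq_add_of_lt hm
      have hd := diff_step (j + m' + 1) (fun r => ((n + r).choose (j + 1) : ℤ))
      have hstep : ∀ r : ℕ, ((n + r).choose (j + 1) : ℤ) - ((n + (r + 1)).choose (j + 1) : ℤ)
          = -((n + r).choose j) := by
        intro r
        have : (n + (r + 1)).choose (j + 1) = (n + r).choose j + (n + r).choose (j + 1) := by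
          rw [show n + (r + 1) = (n + r) + 1 by ring, Nat.choose_succ_succ]
        rw [this]; push_cast; ring
      simp only [hstep] at hd
      rw [show j + 1 + m' + 1 = j + m' + 1 + 1 by ring, show j + m' + 1 + 1 + 1 = j + m' + 1 + 2 by ring]
      rw [hd]
      have hj : j < j + m' + 1 := by omega
      have h0 := ih (j + m' + 1) n hj
      calc ∑ r ∈ range (j + m' + 1 + 1), (-1:ℤ)^r * (j + m' + 1).choose r * -((n + r).choose j)
          = -∑ r ∈ range (j + m' + 1 + 1), (-1:ℤ)^r * (j + m' + 1).choose r * ((n + r).choose j) := by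
            rw [← Finset.sum_neg_distrib]; apply Finset.sum_congr rfl; intros; ring
        _ = 0 := by rw [h0, neg_zero]

/-- For positive integers `k, m` with `k - 1 < m`,
`∑_{r=0}^{m} (-1)^r * C(m-k+r, k-1) * C(m, r) = 0`. -/
theorem stmt_0 (k m : ℕ) (hk : 0 < k) (hm : 0 < m) (h : k - 1 < m) :
    ∑ r ∈ Finset.range (m + 1),
      (-1 : ℤ) ^ r * ((m - k + r).choose (k - 1)) * (m.choose r) = 0 := by
  have h0 := key (k - 1) m (m - k) h
  rw [← h0]
  apply Finset.sum_congr rfl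
  intros; ring
end

section
/- Let m be a positive integer and a_1, ..., a_m be elements of a commutative ring (or of ℚ). Define b_0, ..., b_{2m} by the polynomial identity ∏_{i=1}^m (x + a_i)(x + 1 - a_i) = ∑_{i=0}^{2m} b_i x^{2m-i}. Then for every k with 1 ≤ k ≤ m, we have ∑_{i=0}^{2m-2k+1} (-1)^i * C(k-1+i, k-1) * b_{2m-2k+1-i} = 0. -/
open Polynomial

/-- `Gser k` is the power series `(1+X)^{-(k+1)}` over `ℚ`. -/
noncomputable def Gser (k : ℕ) : PowerSeries ℚ :=
  PowerSeries.mk fun i => (-1 : ℚ) ^ i * ((k + i).choose k)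

lemma coeff_one_add_mul (f : PowerSeries ℚ) (n : ℕ) :
    PowerSeries.coeff (n + 1) ((1 + PowerSeries.X) * f) =
      PowerSeries.coeff (n + 1) f + PowerSeries.coeff n f := by
  rw [add_mul, one_mul, map_add, PowerSeries.coeff_succ_X_mul]

lemma Gser_step (k : ℕ) :
    (1 + PowerSeries.X : PowerSeries ℚ) * Gser (k + 1) = Gser k := by
  ext n
  cases n with
  | zero => simp [Gser, PowerSeries.coeff_zero_eq_constantCoeff, map_mul]
  | succ n =>
    rw [coeff_one_add_mul]
    simp only [Gser, PowerSeries.coeff_mk]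
    have h : (k + 1 + (n + 1)).choose (k + 1)
        = (k + 1 + n).choose k + (k + 1 + n).choose (k + 1) := by
      rw [show k + 1 + (n + 1) = (k + 1 + n) + 1 from by omega]
      simpa using Nat.choose_succ_succ (k + 1 + n) k
    have h2 : (k + (n + 1)).choose k = (k + 1 + n).choose k := by
      congr 1
      omega
    rw [h, h2, Nat.cast_add]
    ring

lemma Gser_zero : (1 + PowerSeries.X : PowerSeries ℚ) * Gser 0 = 1 := by
  ext n
  cases n with
  | zero => simp [Gser, PowerSeries.coeff_zero_eq_constantCoeff, map_mul]
  | succ n =>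
    rw [coeff_one_add_mul]
    simp [Gser]
    ring

lemma Gser_inv (k : ℕ) :
    (1 + PowerSeries.X : PowerSeries ℚ) ^ (k + 1) * Gser k = 1 := by
  induction k with
  | zero => simpa using Gser_zero
  | succ k ih =>
    rw [pow_succ, mul_assoc, mul_comm (1 + PowerSeries.X) (Gser (k + 1))]
    rw [show Gser (k + 1) * (1 + PowerSeries.X) = Gser k from by
      rw [mul_comm]; exact Gser_step k]
    exact ih

lemma reflect_quad (c : ℚ) :
    reflect 2 (X ^ 2 + X + C c) = 1 + X + C c * X ^ 2 := by
  have h1 : (X ^ 2 + X + C c : ℚ[X]) = X ^ 2 + X ^ 1 + C c * X ^ 0 := by ring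
  rw [h1, reflect_add, reflect_add, reflect_monomial, reflect_monomial,
    reflect_C_mul_X_pow]
  norm_num [revAt_le]

lemma reflect_prod2 (s : Finset ℕ) (f : ℕ → ℚ[X]) (h : ∀ i ∈ s, (f i).natDegree ≤ 2) :
    reflect (2 * s.card) (∏ i ∈ s, f i) = ∏ i ∈ s, reflect 2 (f i) := by
  induction s using Finset.induction with
  | empty => simp [reflect_C]
  | @insert a s ha ih =>
    rw [Finset.prod_insert ha, Finset.prod_insert ha, Finset.card_insert_of_notMem ha,
      show 2 * (s.card + 1) = 2 + 2 * s.card from by ring,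
      reflect_mul (f a) _ (h a (Finset.mem_insert_self a s))
        (le_trans (Polynomial.natDegree_prod_le s f) ?_),
      ih (fun i hi => h i (Finset.mem_insert_of_mem hi))]
    calc ∑ i ∈ s, (f i).natDegree ≤ ∑ i ∈ s, 2 :=
          Finset.sum_le_sum (fun i hi => h i (Finset.mem_insert_of_mem hi))
      _ = 2 * s.card := by rw [Finset.sum_const]; ring

/-- with `b_j` the coefficient of `x^{2m-j}` in
`∏_{i=1}^m (x + a_i)(x + 1 - a_i)`, for `1 ≤ k ≤ m` we have
`∑_{i=0}^{2m-2k+1} (-1)^i C(k-1+i, k-1) b_{2m-2k+1-i} = 0`. -/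
theorem stmt_1 (m : ℕ) (hm : 1 ≤ m) (a : ℕ → ℚ) (b : ℕ → ℚ)
    (hb : ∀ j, b j =
      (∏ i ∈ Finset.Icc 1 m,
        ((X + C (a i)) * (X + C (1 - a i)))).coeff (2 * m - j))
    (k : ℕ) (hk1 : 1 ≤ k) (hk2 : k ≤ m) :
    ∑ i ∈ Finset.range (2 * m - 2 * k + 2),
      (-1 : ℚ) ^ i * ((k - 1 + i).choose (k - 1)) * b (2 * m - 2 * k + 1 - i) = 0 := by
  set c : ℕ → ℚ := fun i => a i * (1 - a i) with hc
  have hcard : (Finset.Icc 1 m).card = m := by rw [Nat.card_Icc]; omega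
  have hP2 : (∏ i ∈ Finset.Icc 1 m, ((X + C (a i)) * (X + C (1 - a i))))
      = ∏ i ∈ Finset.Icc 1 m, (X ^ 2 + X + C (c i)) := by
    refine Finset.prod_congr rfl fun i _ => ?_
    simp only [hc, map_mul, map_sub, map_one]
    ring
  set R : ℚ[X] := ∏ i ∈ Finset.Icc 1 m, (C (c i) * X ^ 2 + (1 + X)) with hRdef
  have hrefl : reflect (2 * m)
      (∏ i ∈ Finset.Icc 1 m, ((X + C (a i)) * (X + C (1 - a i)))) = R := by
    rw [hP2, show 2 * m = 2 * (Finset.Icc 1 m).card from by rw [hcard],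
      reflect_prod2 _ _ (fun i _ => by compute_degree)]
    refine Finset.prod_congr rfl fun i _ => ?_
    rw [reflect_quad]
    ring
  have hbR : ∀ j, j ≤ 2 * m → b j = R.coeff j := by
    intro j hj
    rw [hb, ← hrefl, coeff_reflect, revAt_le hj]
  set N := 2 * m - 2 * k + 1 with hN
  have hsum : ∑ i ∈ Finset.range (2 * m - 2 * k + 2),
      (-1 : ℚ) ^ i * ((k - 1 + i).choose (k - 1)) * b (2 * m - 2 * k + 1 - i)
      = PowerSeries.coeff N (Gser (k - 1) * (R : PowerSeries ℚ)) := by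
    rw [PowerSeries.coeff_mul, Finset.Nat.sum_antidiagonal_eq_sum_range_succ_mk,
      show N + 1 = 2 * m - 2 * k + 2 from by omega]
    refine Finset.sum_congr rfl fun i hi => ?_
    rw [Finset.mem_range] at hi
    rw [hbR _ (by omega)]
    simp only [Gser, PowerSeries.coeff_mk, Polynomial.coeff_coe, mul_assoc, hN]
  rw [hsum]
  have hcast : ((R : ℚ[X]) : PowerSeries ℚ) = ∑ t ∈ (Finset.Icc 1 m).powerset,
      PowerSeries.C (∏ i ∈ t, c i) * PowerSeries.X ^ (2 * t.card) *
        (1 + PowerSeries.X) ^ (m - t.card) := by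
    rw [hRdef, Finset.prod_add, ← Polynomial.coeToPowerSeries.ringHom_apply, map_sum]
    refine Finset.sum_congr rfl fun t ht => ?_
    rw [Finset.mem_powerset] at ht
    have h1 : ∏ i ∈ t, (C (c i) * X ^ 2 : ℚ[X]) = C (∏ i ∈ t, c i) * X ^ (2 * t.card) := by
      rw [Finset.prod_mul_distrib, ← map_prod, Finset.prod_const, ← pow_mul]
    have h2 : ∏ i ∈ (Finset.Icc 1 m) \ t, (1 + X : ℚ[X]) = (1 + X) ^ (m - t.card) := by
      rw [Finset.prod_const, Finset.card_sdiff_of_subset ht, hcard]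
    rw [h1, h2]
    simp only [map_mul, map_pow, map_add, map_one,
      Polynomial.coeToPowerSeries.ringHom_apply, Polynomial.coe_C, Polynomial.coe_X]
  rw [hcast, Finset.mul_sum, map_sum]
  refine Finset.sum_eq_zero fun t ht => ?_
  rw [Finset.mem_powerset] at ht
  have hjm : t.card ≤ m := hcard ▸ Finset.card_le_card ht
  set j := t.card with hj
  have hre : Gser (k - 1) * (PowerSeries.C (∏ i ∈ t, c i) * PowerSeries.X ^ (2 * j) *
        (1 + PowerSeries.X) ^ (m - j))
      = PowerSeries.X ^ (2 * j) * (PowerSeries.C (∏ i ∈ t, c i) *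
        ((1 + PowerSeries.X) ^ (m - j) * Gser (k - 1))) := by ring
  rw [hre, PowerSeries.coeff_X_pow_mul']
  by_cases hle : 2 * j ≤ N
  · rw [if_pos hle]
    have hjk : j ≤ m - k := by omega
    have hinv : (1 + PowerSeries.X : PowerSeries ℚ) ^ (m - j) * Gser (k - 1)
        = (1 + PowerSeries.X) ^ (m - j - k) := by
      have hmj : m - j = (m - j - k) + ((k - 1) + 1) := by omega
      conv_lhs => rw [hmj, pow_add, mul_assoc, Gser_inv, mul_one]
    rw [hinv, PowerSeries.coeff_C_mul]
    have hco : PowerSeries.coeff (N - 2 * j) ((1 + PowerSeries.X : PowerSeries ℚ) ^ (m - j - k))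
        = ((m - j - k).choose (N - 2 * j) : ℚ) := by
      rw [show ((1 : PowerSeries ℚ) + PowerSeries.X) = ((1 + X : ℚ[X]) : PowerSeries ℚ) from by
        simp, ← Polynomial.coe_pow, Polynomial.coeff_coe, coeff_one_add_X_pow]
    rw [hco, Nat.choose_eq_zero_of_lt (by omega), Nat.cast_zero, mul_zero]
  · rw [if_neg hle]
end

section
/- Let m be a positive integer, a_1, ..., a_m rational numbers, and define β_0, ..., β_{2m+1} by (x + 1/2) ∏_{i=1}^m (x + a_i)(x + 1 - a_i) = ∑_{i=0}^{2m+1} β_i x^{2m+1-i}. Then for every k with 1 ≤ k ≤ m: ∑_{i=0}^{2m-2k+1} (-1)^i C(k-1+i, k-1) β_{2m-2k+1-i} = (1/2) ∑_{i=0}^{2m-2k} (-1)^i C(k+i, k) β_{2m-2k-i}. -/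
open Polynomial

noncomputable def Jps (r : ℕ) : PowerSeries ℚ :=
  PowerSeries.mk fun i => (-1 : ℚ) ^ i * ((r + i).choose r : ℚ)

lemma coeff_one_add_X_mul (φ : PowerSeries ℚ) (n : ℕ) :
    PowerSeries.coeff (n + 1) ((1 + PowerSeries.X) * φ) =
      PowerSeries.coeff (n + 1) φ + PowerSeries.coeff n φ := by
  rw [add_mul, one_mul, map_add, PowerSeries.coeff_succ_X_mul]

lemma one_add_X_mul_Jps_zero : (1 + PowerSeries.X) * Jps 0 = 1 := by
  ext n
  cases n with
  | zero =>
      simp [Jps, PowerSeries.coeff_zero_eq_constantCoeff, map_mul]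
  | succ n =>
      rw [coeff_one_add_X_mul]
      simp [Jps, pow_succ]

lemma one_add_X_mul_Jps_succ (r : ℕ) : (1 + PowerSeries.X) * Jps (r + 1) = Jps r := by
  ext n
  cases n with
  | zero =>
      simp [Jps, PowerSeries.coeff_zero_eq_constantCoeff, map_mul]
  | succ n =>
      rw [coeff_one_add_X_mul]
      simp only [Jps, PowerSeries.coeff_mk]
      have e1 : r + 1 + (n + 1) = (r + 1 + n) + 1 := by omega
      have e2 : r + (n + 1) = r + 1 + n := by omega
      rw [e1, e2, Nat.choose_succ_succ (r + 1 + n) r]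
      push_cast
      ring

lemma coe_prod' {ι : Type*} (s : Finset ι) (f : ι → ℚ[X]) :
    ((∏ i ∈ s, f i : ℚ[X]) : PowerSeries ℚ) = ∏ i ∈ s, ((f i : ℚ[X]) : PowerSeries ℚ) := by
  simpa only [Polynomial.coeToPowerSeries.ringHom_apply] using
    map_prod Polynomial.coeToPowerSeries.ringHom f s

lemma deg_vanish (q N : ℕ) (b : ℕ → ℚ) (hN : 2 * q + 2 < N) :
    PowerSeries.coeff N ((1 + PowerSeries.C (1/2) * PowerSeries.X) ^ 2 *
      ∏ i ∈ Finset.range q,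
        (1 + PowerSeries.X + PowerSeries.C (b i) * PowerSeries.X ^ 2)) = 0 := by
  have hcast : ((((1 + Polynomial.C (1/2 : ℚ) * Polynomial.X) ^ 2 *
      ∏ i ∈ Finset.range q,
        (1 + Polynomial.X + Polynomial.C (b i) * Polynomial.X ^ 2)) : ℚ[X]) : PowerSeries ℚ)
      = (1 + PowerSeries.C (1/2) * PowerSeries.X) ^ 2 *
      ∏ i ∈ Finset.range q,
        (1 + PowerSeries.X + PowerSeries.C (b i) * PowerSeries.X ^ 2) := by
    rw [Polynomial.coe_mul, coe_prod']
    simp [Polynomial.coe_add, Polynomial.coe_one, Polynomial.coe_mul, Polynomial.coe_C,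
      Polynomial.coe_X, Polynomial.coe_pow]
  rw [← hcast, Polynomial.coeff_coe]
  apply Polynomial.coeff_eq_zero_of_natDegree_lt
  have h1 : ((1 + Polynomial.C (1/2 : ℚ) * Polynomial.X) ^ 2).natDegree ≤ 2 := by
    compute_degree
  have h2 : (∏ i ∈ Finset.range q,
      (1 + Polynomial.X + Polynomial.C (b i) * Polynomial.X ^ 2) : ℚ[X]).natDegree ≤ 2 * q := by
    refine (Polynomial.natDegree_prod_le _ _).trans ?_
    calc ∑ i ∈ Finset.range q,
          ((1 + Polynomial.X + Polynomial.C (b i) * Polynomial.X ^ 2 : ℚ[X])).natDegree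
        ≤ ∑ _i ∈ Finset.range q, 2 := Finset.sum_le_sum (fun i _ => by compute_degree)
      _ = 2 * q := by simp [mul_comm]
  have := Polynomial.natDegree_mul_le.trans (add_le_add h1 h2)
  omega

lemma hsq : (1 + PowerSeries.C (1/2 : ℚ) * PowerSeries.X) ^ 2
    = 1 + PowerSeries.X + PowerSeries.C (1/4 : ℚ) * PowerSeries.X ^ 2 := by
  have h2 : PowerSeries.C (1/2 : ℚ) * PowerSeries.C (1/2 : ℚ) = PowerSeries.C (1/4 : ℚ) := by
    rw [← map_mul]; norm_num
  have h1 : PowerSeries.C (1/2 : ℚ) + PowerSeries.C (1/2 : ℚ) = 1 := by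
    rw [← map_add]; norm_num
  linear_combination PowerSeries.X * h1 + PowerSeries.X ^ 2 * h2

lemma key_s3 : ∀ q k p : ℕ, ∀ b : ℕ → ℚ, q = p + k →
    PowerSeries.coeff (2 * p + 1)
      ((1 + PowerSeries.C (1/2) * PowerSeries.X) ^ 2 *
        (∏ i ∈ Finset.range q,
          (1 + PowerSeries.X + PowerSeries.C (b i) * PowerSeries.X ^ 2)) *
        Jps k) = 0 := by
  intro q
  induction q with
  | zero =>
      intro k p b h
      obtain ⟨rfl, rfl⟩ : p = 0 ∧ k = 0 := by omega
      rw [Finset.prod_range_zero, mul_one, hsq]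
      have expand : (1 + PowerSeries.X + PowerSeries.C (1/4) * PowerSeries.X ^ 2) * Jps 0
          = (1 + PowerSeries.X) * Jps 0
            + PowerSeries.C (1/4) * (PowerSeries.X * (PowerSeries.X * Jps 0)) := by
        ring
      rw [expand, one_add_X_mul_Jps_zero, map_add, PowerSeries.coeff_C_mul]
      norm_num [PowerSeries.coeff_one, PowerSeries.coeff_succ_X_mul, PowerSeries.coeff_zero_X_mul]
  | succ q ih =>
      intro k p b h
      rw [Finset.prod_range_succ]
      have expand :
          (1 + PowerSeries.C (1/2) * PowerSeries.X) ^ 2 *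
            ((∏ i ∈ Finset.range q,
              (1 + PowerSeries.X + PowerSeries.C (b i) * PowerSeries.X ^ 2)) *
              (1 + PowerSeries.X + PowerSeries.C (b q) * PowerSeries.X ^ 2)) * Jps k
          = (1 + PowerSeries.C (1/2) * PowerSeries.X) ^ 2 *
              (∏ i ∈ Finset.range q,
                (1 + PowerSeries.X + PowerSeries.C (b i) * PowerSeries.X ^ 2)) *
              ((1 + PowerSeries.X) * Jps k)
            + PowerSeries.C (b q) *
              (PowerSeries.X * (PowerSeries.X *
                ((1 + PowerSeries.C (1/2) * PowerSeries.X) ^ 2 *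
                  (∏ i ∈ Finset.range q,
                    (1 + PowerSeries.X + PowerSeries.C (b i) * PowerSeries.X ^ 2)) *
                  Jps k))) := by
        ring
      rw [expand, map_add]
      have term1 : PowerSeries.coeff (2 * p + 1)
          ((1 + PowerSeries.C (1/2) * PowerSeries.X) ^ 2 *
            (∏ i ∈ Finset.range q,
              (1 + PowerSeries.X + PowerSeries.C (b i) * PowerSeries.X ^ 2)) *
            ((1 + PowerSeries.X) * Jps k)) = 0 := by
        cases k with
        | zero =>
            rw [one_add_X_mul_Jps_zero, mul_one]
            exact deg_vanish q (2 * p + 1) b (by omega)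
        | succ k' =>
            rw [one_add_X_mul_Jps_succ]
            exact ih k' p b (by omega)
      have term2 : PowerSeries.coeff (2 * p + 1)
          (PowerSeries.C (b q) *
            (PowerSeries.X * (PowerSeries.X *
              ((1 + PowerSeries.C (1/2) * PowerSeries.X) ^ 2 *
                (∏ i ∈ Finset.range q,
                  (1 + PowerSeries.X + PowerSeries.C (b i) * PowerSeries.X ^ 2)) *
                Jps k)))) = 0 := by
        rw [PowerSeries.coeff_C_mul]
        cases p with
        | zero =>
            norm_num [PowerSeries.coeff_succ_X_mul, PowerSeries.coeff_zero_X_mul]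
        | succ p' =>
            rw [show 2 * (p' + 1) + 1 = (2 * p' + 1) + 1 + 1 by ring,
              PowerSeries.coeff_succ_X_mul, PowerSeries.coeff_succ_X_mul,
              ih k p' b (by omega), mul_zero]
      rw [term1, term2, add_zero]

lemma reverse_X_add_C' (c : ℚ) : (X + Polynomial.C c : ℚ[X]).reverse = 1 + Polynomial.C c * X := by
  ext n
  rw [Polynomial.coeff_reverse, natDegree_X_add_C]
  match n with
  | 0 => simp
  | 1 => simp [Polynomial.coeff_one]
  | (n + 2) =>
      rw [Polynomial.revAt_eq_self_of_lt (by omega)]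
      simp [Polynomial.coeff_X, Polynomial.coeff_C, Polynomial.coeff_one]

lemma reverse_prod' {ι : Type*} (s : Finset ι) (f : ι → ℚ[X]) :
    (∏ i ∈ s, f i).reverse = ∏ i ∈ s, (f i).reverse := by
  classical
  induction s using Finset.cons_induction with
  | empty => simpa using Polynomial.reverse_C (1 : ℚ)
  | cons a s ha ih =>
      rw [Finset.prod_cons, Finset.prod_cons, Polynomial.reverse_mul_of_domain, ih]

/-- with `β_j` the coefficient of `x^{2m+1-j}` in
`(x + 1/2) ∏_{i=1}^m (x + a_i)(x + 1 - a_i)`, for `1 ≤ k ≤ m` we have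
`∑_{i=0}^{2m-2k+1} (-1)^i C(k-1+i,k-1) β_{2m-2k+1-i}
  = (1/2) ∑_{i=0}^{2m-2k} (-1)^i C(k+i,k) β_{2m-2k-i}`. -/
theorem stmt_3 (m : ℕ) (hm : 1 ≤ m) (a : ℕ → ℚ) (β : ℕ → ℚ)
    (hβ : ∀ j, β j =
      ((X + C (1/2 : ℚ)) * ∏ i ∈ Finset.Icc 1 m,
        ((X + C (a i)) * (X + C (1 - a i)))).coeff (2 * m + 1 - j))
    (k : ℕ) (hk1 : 1 ≤ k) (hk2 : k ≤ m) :
    ∑ i ∈ Finset.range (2 * m - 2 * k + 2),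
      (-1 : ℚ) ^ i * ((k - 1 + i).choose (k - 1)) * β (2 * m - 2 * k + 1 - i) =
    (1/2 : ℚ) * ∑ i ∈ Finset.range (2 * m - 2 * k + 1),
      (-1 : ℚ) ^ i * ((k + i).choose k) * β (2 * m - 2 * k - i) := by
  obtain ⟨K, rfl⟩ : ∃ K, k = K + 1 := ⟨k - 1, by omega⟩
  obtain ⟨p, hpm⟩ : ∃ p, m = p + (K + 1) := ⟨m - (K + 1), by omega⟩
  have hmon : ∀ i ∈ Finset.Icc 1 m, ((X + C (a i)) * (X + C (1 - a i)) : ℚ[X]).Monic :=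
    fun i _ => (monic_X_add_C _).mul (monic_X_add_C _)
  have hprodmon : (∏ i ∈ Finset.Icc 1 m, ((X + C (a i)) * (X + C (1 - a i))) : ℚ[X]).Monic :=
    monic_prod_of_monic _ _ hmon
  have hdeg : ((X + C (1/2 : ℚ)) * ∏ i ∈ Finset.Icc 1 m,
      ((X + C (a i)) * (X + C (1 - a i)))).natDegree = 2 * m + 1 := by
    rw [(monic_X_add_C _).natDegree_mul hprodmon, natDegree_X_add_C,
      Polynomial.natDegree_prod _ _ (fun i hi => (hmon i hi).ne_zero)]
    have h2 : ∀ i ∈ Finset.Icc 1 m,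
        ((X + C (a i)) * (X + C (1 - a i)) : ℚ[X]).natDegree = 2 := fun i _ => by
      rw [(monic_X_add_C _).natDegree_mul (monic_X_add_C _), natDegree_X_add_C,
        natDegree_X_add_C]
    rw [Finset.sum_congr rfl h2, Finset.sum_const, Nat.card_Icc, smul_eq_mul]
    omega
  have hrev : ((X + C (1/2 : ℚ)) * ∏ i ∈ Finset.Icc 1 m,
        ((X + C (a i)) * (X + C (1 - a i)))).reverse
      = (1 + C (1/2 : ℚ) * X) * ∏ i ∈ Finset.Icc 1 m,
        ((1 + C (a i) * X) * (1 + C (1 - a i) * X)) := by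
    rw [Polynomial.reverse_mul_of_domain, reverse_prod', reverse_X_add_C']
    exact congrArg _ (Finset.prod_congr rfl fun i _ => by
      rw [Polynomial.reverse_mul_of_domain, reverse_X_add_C', reverse_X_add_C'])
  set B : PowerSeries ℚ := (((1 + C (1/2 : ℚ) * X) * ∏ i ∈ Finset.Icc 1 m,
      ((1 + C (a i) * X) * (1 + C (1 - a i) * X)) : ℚ[X]) : PowerSeries ℚ) with hB
  have hcoeffB : ∀ j, j ≤ 2 * m + 1 → PowerSeries.coeff j B = β j := by
    intro j hj
    rw [hB, Polynomial.coeff_coe, ← hrev, Polynomial.coeff_reverse, hdeg,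
      Polynomial.revAt_le hj, hβ j]
  have hL : PowerSeries.coeff (2 * p + 1) (Jps K * B) =
      ∑ i ∈ Finset.range (2 * m - 2 * (K + 1) + 2),
        (-1 : ℚ) ^ i * (((K + 1) - 1 + i).choose ((K + 1) - 1)) *
          β (2 * m - 2 * (K + 1) + 1 - i) := by
    rw [PowerSeries.coeff_mul, Finset.Nat.sum_antidiagonal_eq_sum_range_succ_mk,
      show 2 * m - 2 * (K + 1) + 2 = 2 * p + 1 + 1 by omega]
    refine Finset.sum_congr rfl fun i hi => ?_
    rw [Finset.mem_range] at hi
    simp only [Jps, PowerSeries.coeff_mk, Nat.add_sub_cancel]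
    rw [hcoeffB _ (by omega), show 2 * m - 2 * (K + 1) + 1 - i = 2 * p + 1 - i by omega]
  have hR : PowerSeries.coeff (2 * p) (Jps (K + 1) * B) =
      ∑ i ∈ Finset.range (2 * m - 2 * (K + 1) + 1),
        (-1 : ℚ) ^ i * (((K + 1) + i).choose (K + 1)) * β (2 * m - 2 * (K + 1) - i) := by
    rw [PowerSeries.coeff_mul, Finset.Nat.sum_antidiagonal_eq_sum_range_succ_mk,
      show 2 * m - 2 * (K + 1) + 1 = 2 * p + 1 by omega]
    refine Finset.sum_congr rfl fun i hi => ?_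
    rw [Finset.mem_range] at hi
    simp only [Jps, PowerSeries.coeff_mk]
    rw [hcoeffB _ (by omega), show 2 * m - 2 * (K + 1) - i = 2 * p - i by omega]
  rw [← hL, ← hR]
  have h1 : PowerSeries.coeff (2 * p + 1) (Jps K * B)
      = PowerSeries.coeff (2 * p + 1) (Jps (K + 1) * B)
        + PowerSeries.coeff (2 * p) (Jps (K + 1) * B) := by
    rw [← one_add_X_mul_Jps_succ K,
      show (1 + PowerSeries.X) * Jps (K + 1) * B
        = (1 + PowerSeries.X) * (Jps (K + 1) * B) by ring,
      coeff_one_add_X_mul]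
  have h2 : PowerSeries.coeff (2 * p + 1) (Jps (K + 1) * B)
      + (1/2 : ℚ) * PowerSeries.coeff (2 * p) (Jps (K + 1) * B) = 0 := by
    have hkey := key_s3 m (K + 1) p (fun i => a (1 + i) * (1 - a (1 + i))) hpm
    have hBps : B = (1 + PowerSeries.C (1/2) * PowerSeries.X) *
        ∏ i ∈ Finset.range m,
          (1 + PowerSeries.X + PowerSeries.C (a (1 + i) * (1 - a (1 + i))) *
            PowerSeries.X ^ 2) := by
      rw [hB, Polynomial.coe_mul, coe_prod']
      have hfac : ∀ i : ℕ, (((1 + C (a i) * X) * (1 + C (1 - a i) * X) : ℚ[X]) : PowerSeries ℚ)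
          = 1 + PowerSeries.X + PowerSeries.C (a i * (1 - a i)) * PowerSeries.X ^ 2 := by
        intro i
        rw [Polynomial.coe_mul]
        simp only [Polynomial.coe_add, Polynomial.coe_one, Polynomial.coe_mul,
          Polynomial.coe_C, Polynomial.coe_X]
        rw [show PowerSeries.C (1 - a i) = 1 - PowerSeries.C (a i) by
            rw [map_sub, map_one],
          show PowerSeries.C (a i * (1 - a i))
            = PowerSeries.C (a i) * (1 - PowerSeries.C (a i)) by
            rw [map_mul, map_sub, map_one]]
        ring
      congr 1
      · simp only [Polynomial.coe_add, Polynomial.coe_one, Polynomial.coe_mul,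
          Polynomial.coe_C, Polynomial.coe_X]
      · rw [← Finset.Ico_add_one_right_eq_Icc, Finset.prod_Ico_eq_prod_range]
        simp only [Nat.add_sub_cancel]
        exact Finset.prod_congr rfl fun i _ => hfac (1 + i)
    have hre : (1 + PowerSeries.C (1/2) * PowerSeries.X) ^ 2 *
        (∏ i ∈ Finset.range m,
          (1 + PowerSeries.X + PowerSeries.C (a (1 + i) * (1 - a (1 + i))) *
            PowerSeries.X ^ 2)) * Jps (K + 1)
        = Jps (K + 1) * B + PowerSeries.C (1/2) *
            (PowerSeries.X * (Jps (K + 1) * B)) := by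
      rw [hBps]; ring
    rw [hre, map_add, PowerSeries.coeff_C_mul, PowerSeries.coeff_succ_X_mul] at hkey
    linarith [hkey]
  linarith [h1, h2]
end

section
/- Let n ≥ 2, let A be a commutative ℚ-algebra with variables, and let 𝒫_t(X) = X_1^{n+1} + ⋯ + X_{n+1}^{n+1} − (n+1) t X_1⋯X_{n+1} in A[X_1,...,X_{n+1}] with t an indeterminate. For m ≥ 0 let A_m ∈ ℚ[t, t^{-1}] denote the coefficient of (X_1 ⋯ X_{n+1})^m in 𝒫_t(X)^m. Then A_m = ∑_{r ≥ 0, (n+1)r ≤ m} (∏_{i=0}^{n} C(m − r i, r)) · (−(n+1) t)^{m − r(n+1)}. -/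
open MvPolynomial Finset

lemma prod_X_pow_univ {σ : Type*} [Fintype σ] [DecidableEq σ] {R : Type*} [CommSemiring R]
    (g : σ → ℕ) :
    (∏ i : σ, (X i : MvPolynomial σ R) ^ g i) =
      monomial (Finsupp.equivFunOnFinite.symm g) 1 := by
  rw [← prod_X_pow_eq_monomial]
  refine (Finset.prod_subset (Finset.subset_univ _) fun i _ hi => ?_).symm
  rw [Finsupp.notMem_support_iff] at hi
  rw [show g i = 0 from hi, pow_zero]

lemma multinomial_univ_eq (N r : ℕ) :
    Nat.multinomial (univ : Finset (Fin N)) (fun _ => r)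
      = Nat.multinomial (range N) (fun _ => r) := by
  unfold Nat.multinomial
  simp

lemma prod_choose_eq (m r : ℕ) : ∀ j, j * r ≤ m →
    ∏ i ∈ range j, (m - r * i).choose r
      = m.choose (j * r) * Nat.multinomial (range j) (fun _ => r) := by
  intro j
  induction j with
  | zero => simp [Nat.multinomial]
  | succ j ih =>
    intro h
    have hle : j * r ≤ m := le_trans (Nat.mul_le_mul_right r (Nat.le_succ j)) h
    rw [Finset.prod_range_succ, ih hle, Finset.range_add_one,
      Nat.multinomial_insert Finset.notMem_range_self, Finset.sum_const, Finset.card_range,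
      smul_eq_mul]
    have key : m.choose ((j+1)*r) * ((j+1)*r).choose (j*r)
        = m.choose (j*r) * (m - j*r).choose ((j+1)*r - j*r) :=
      Nat.choose_mul (Nat.mul_le_mul_right r (Nat.le_succ j))
    have h1 : (j+1)*r - j*r = r := by ring_nf; omega
    have h2 : ((j+1)*r).choose (j*r) = ((j+1)*r).choose r := by
      have : (j+1)*r = j*r + r := by ring
      rw [this, Nat.choose_symm_add]
    have h3 : r + j * r = (j+1) * r := by ring
    rw [h1, h2] at key
    rw [h3]
    have h4 : m - r * j = m - j * r := by rw [mul_comm]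
    rw [h4]
    calc m.choose (j * r) * Nat.multinomial (range j) (fun _ => r) * (m - j*r).choose r
        = m.choose (j*r) * (m - j*r).choose r * Nat.multinomial (range j) (fun _ => r) := by ring
      _ = m.choose ((j+1)*r) * (((j+1)*r).choose r) * Nat.multinomial (range j) (fun _ => r) := by
          rw [key]
      _ = m.choose ((j + 1) * r) * (((j+1) * r).choose r * Nat.multinomial (range j) fun _ => r) := by
          ring

lemma coeff_sum_pow (n k : ℕ) :
    MvPolynomial.coeff (Finsupp.equivFunOnFinite.symm fun _ : Fin (n + 1) => k)
      ((∑ i : Fin (n + 1), (X i : MvPolynomial (Fin (n + 1)) (Polynomial ℚ)) ^ (n + 1)) ^ k) =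
    if (n + 1) ∣ k then
      (Nat.multinomial Finset.univ (fun _ : Fin (n + 1) => k / (n + 1)) : Polynomial ℚ)
    else 0 := by
  classical
  rw [Finset.sum_pow_eq_sum_piAntidiag, MvPolynomial.coeff_sum]
  have hterm : ∀ d : Fin (n+1) → ℕ,
      MvPolynomial.coeff (Finsupp.equivFunOnFinite.symm fun _ : Fin (n+1) => k)
        ((Nat.multinomial univ d : MvPolynomial (Fin (n+1)) (Polynomial ℚ))
          * ∏ i : Fin (n+1), (X i ^ (n+1)) ^ d i)
      = if (fun i : Fin (n+1) => (n+1) * d i) = (fun _ => k)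
          then (Nat.multinomial univ d : Polynomial ℚ) else 0 := by
    intro d
    simp_rw [← pow_mul]
    rw [prod_X_pow_univ,
      ← map_natCast (MvPolynomial.C : Polynomial ℚ →+* MvPolynomial (Fin (n+1)) (Polynomial ℚ)),
      MvPolynomial.coeff_C_mul, MvPolynomial.coeff_monomial]
    simp only [EmbeddingLike.apply_eq_iff_eq, mul_ite, mul_one, mul_zero]
  simp_rw [hterm]
  by_cases h : (n + 1) ∣ k
  · obtain ⟨r, rfl⟩ := h
    rw [if_pos ⟨r, rfl⟩]
    rw [Finset.sum_eq_single (fun _ : Fin (n+1) => r)]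
    · rw [if_pos rfl, show ((n+1)*r)/(n+1) = r from Nat.mul_div_cancel_left r (Nat.succ_pos n)]
    · intro d _ hne
      rw [if_neg]
      intro hfun
      apply hne
      funext i
      have := congrFun hfun i
      have hpos : 0 < n + 1 := Nat.succ_pos n
      exact Nat.eq_of_mul_eq_mul_left hpos this
    · intro habs
      exact absurd (by simp [Finset.mem_piAntidiag, Finset.sum_const, mul_comm]) habs
  · rw [if_neg h]
    apply Finset.sum_eq_zero
    intro d _
    rw [if_neg]
    intro hfun
    exact h ⟨d 0, (congrFun hfun 0).symm⟩

/-- `A_m`, the coefficient of `(X_1 ⋯ X_{n+1})^m` in `𝒫_t(X)^m`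
where `𝒫_t(X) = ∑ X_i^{n+1} − (n+1) t ∏ X_i`, equals
`∑_{r ≥ 0, (n+1)r ≤ m} (∏_{i=0}^n C(m − r i, r)) (−(n+1)t)^{m − r(n+1)}` in `ℚ[t]`. -/
theorem stmt_7 (n m : ℕ) (hn : 2 ≤ n) :
    MvPolynomial.coeff (Finsupp.equivFunOnFinite.symm fun _ : Fin (n + 1) => m)
      (((∑ i : Fin (n + 1), MvPolynomial.X i ^ (n + 1)) -
          MvPolynomial.C (((n : Polynomial ℚ) + 1) * Polynomial.X) *
            ∏ i : Fin (n + 1), MvPolynomial.X i) ^ m) =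
    ∑ r ∈ (Finset.range (m + 1)).filter (fun r => (n + 1) * r ≤ m),
      Polynomial.C ((∏ i ∈ Finset.range (n + 1), ((m - r * i).choose r : ℚ))) *
        (-(((n : Polynomial ℚ) + 1) * Polynomial.X)) ^ (m - r * (n + 1)) := by
  classical
  set c : Polynomial ℚ := ((n : Polynomial ℚ) + 1) * Polynomial.X with hc
  set u : ℕ → (Fin (n+1) →₀ ℕ) := fun j => Finsupp.equivFunOnFinite.symm fun _ : Fin (n+1) => j
    with hu
  have hmono : ∀ j : ℕ,
      (-(MvPolynomial.C c * ∏ i : Fin (n+1), (X i : MvPolynomial (Fin (n+1)) (Polynomial ℚ)))) ^ j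
        = monomial (u j) ((-c) ^ j) := by
    intro j
    have h1 : -(MvPolynomial.C c * ∏ i : Fin (n+1), (X i : MvPolynomial (Fin (n+1)) (Polynomial ℚ)))
        = MvPolynomial.C (-c) * ∏ i : Fin (n+1), X i := by
      rw [map_neg]; ring
    rw [h1, mul_pow, ← map_pow, ← Finset.prod_pow, prod_X_pow_univ, C_mul_monomial, mul_one]
  rw [sub_eq_add_neg, add_pow, MvPolynomial.coeff_sum]
  have hterm : ∀ k ∈ Finset.range (m+1),
      MvPolynomial.coeff (u m)
        ((∑ i : Fin (n + 1), (X i : MvPolynomial (Fin (n+1)) (Polynomial ℚ)) ^ (n + 1)) ^ k *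
          (-(MvPolynomial.C c * ∏ i : Fin (n+1), X i)) ^ (m - k) *
          ((m.choose k : ℕ) : MvPolynomial (Fin (n+1)) (Polynomial ℚ)))
      = (if (n + 1) ∣ k then
          (Nat.multinomial Finset.univ (fun _ : Fin (n + 1) => k / (n + 1)) : Polynomial ℚ)
          else 0) * ((-c) ^ (m - k) * (m.choose k : Polynomial ℚ)) := by
    intro k hk
    have hk' : k ≤ m := Nat.lt_succ_iff.mp (Finset.mem_range.mp hk)
    rw [hmono (m - k), mul_right_comm,
      ← map_natCast (MvPolynomial.C : Polynomial ℚ →+* MvPolynomial (Fin (n+1)) (Polynomial ℚ)),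
      coeff_mul_monomial']
    have hle : u (m - k) ≤ u m := by
      rw [Finsupp.le_def]
      intro i
      simp only [hu, Finsupp.equivFunOnFinite_symm_apply_apply]
      omega
    rw [if_pos hle]
    have hsub : u m - u (m - k) = u k := by
      ext i
      simp only [hu, Finsupp.tsub_apply, Finsupp.equivFunOnFinite_symm_apply_apply]
      omega
    rw [hsub, mul_comm _ (MvPolynomial.C ((m.choose k : Polynomial ℚ))), coeff_C_mul]
    simp only [hu]
    rw [coeff_sum_pow n k]
    ring
  rw [Finset.sum_congr rfl hterm]
  simp_rw [ite_mul, zero_mul]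
  rw [← Finset.sum_filter]
  refine Finset.sum_nbij' (fun k => k / (n+1)) (fun r => (n+1) * r) ?_ ?_ ?_ ?_ ?_
  · intro k hk
    simp only [Finset.mem_filter, Finset.mem_range] at hk ⊢
    obtain ⟨hk1, r, rfl⟩ := hk
    simp only [Nat.mul_div_cancel_left r (Nat.succ_pos n)]
    have : r ≤ (n + 1) * r := Nat.le_mul_of_pos_left r (by omega)
    omega
  · intro r hr
    simp only [Finset.mem_filter, Finset.mem_range] at hr ⊢
    exact ⟨by omega, ⟨r, rfl⟩⟩
  · intro k hk
    simp only [Finset.mem_filter, Finset.mem_range] at hk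
    obtain ⟨-, hd⟩ := hk
    exact Nat.mul_div_cancel' hd
  · intro r hr
    exact Nat.mul_div_cancel_left r (Nat.succ_pos n)
  · intro k hk
    simp only [Finset.mem_filter, Finset.mem_range] at hk
    obtain ⟨hk1, r, rfl⟩ := hk
    have hrm : (n + 1) * r ≤ m := by omega
    simp only [Nat.mul_div_cancel_left r (Nat.succ_pos n)]
    have hprod : ∏ i ∈ Finset.range (n + 1), ((m - r * i).choose r : ℚ)
        = ((m.choose ((n+1) * r) * Nat.multinomial Finset.univ (fun _ : Fin (n+1) => r) : ℕ) : ℚ) := by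
      rw [← Nat.cast_prod, prod_choose_eq m r (n+1) hrm, multinomial_univ_eq]
    rw [hprod, map_natCast (Polynomial.C : ℚ →+* Polynomial ℚ)]
    have he : m - r * (n + 1) = m - (n + 1) * r := by rw [mul_comm]
    rw [he]
    push_cast
    ring
end

section
/- Let n ≥ 2, p a prime with gcd(p, n+1) = 1, and q = p^r. Let A_m ∈ 𝔽_p[t] be the coefficient of (X_1⋯X_{n+1})^m in (X_1^{n+1} + ⋯ + X_{n+1}^{n+1} − (n+1)t X_1⋯X_{n+1})^m reduced mod p. Then A_{q−1} ≡ (A_{p−1})^{(q−1)/(p−1)} (mod p) as polynomials in 𝔽_p[t]. -/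
open MvPolynomial


open MvPolynomial

namespace Stmt8Aux

variable {σ R : Type*} [CommSemiring R]

lemma expand_monomial_smul (p : ℕ) (hp : p ≠ 0) (d : σ →₀ ℕ) (r : R) :
    expand p (monomial d r) = monomial (p • d) r := by
  rw [monomial_eq, monomial_eq, map_mul, expand_C]
  congr 1
  rw [Finsupp.prod, Finsupp.prod, map_prod, Finsupp.support_smul_eq hp]
  exact Finset.prod_congr rfl fun i _ => by
    rw [map_pow, expand_X, ← pow_mul, Finsupp.smul_apply, smul_eq_mul]

lemma smul_finsupp_injective (p : ℕ) (hp : p ≠ 0) :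
    Function.Injective fun d : σ →₀ ℕ => p • d := by
  intro a b h
  ext i
  have := DFunLike.congr_fun h i
  simp only [Finsupp.smul_apply, smul_eq_mul] at this
  exact Nat.eq_of_mul_eq_mul_left (Nat.pos_of_ne_zero hp) this

lemma coeff_expand_smul (p : ℕ) (hp : p ≠ 0) (f : MvPolynomial σ R) (d : σ →₀ ℕ) :
    coeff (p • d) (expand p f) = coeff d f := by
  classical
  conv_lhs => rw [f.as_sum]
  rw [map_sum]
  simp_rw [expand_monomial_smul p hp]
  rw [MvPolynomial.coeff_sum]
  simp_rw [coeff_monomial]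
  by_cases hd : d ∈ f.support
  · rw [Finset.sum_eq_single_of_mem d hd]
    · rw [if_pos rfl]
    · intro b _ hb
      rw [if_neg fun hh => hb (smul_finsupp_injective p hp hh)]
  · rw [Finset.sum_eq_zero, eq_comm]
    · exact MvPolynomial.notMem_support_iff.mp hd
    · intro b hb
      apply if_neg
      intro hh
      have hbd : b = d := smul_finsupp_injective p hp hh
      subst hbd
      exact hd hb

lemma coeff_expand_ne_zero (p : ℕ) (hp : p ≠ 0) (f : MvPolynomial σ R) (d : σ →₀ ℕ)
    (h : coeff d (expand p f) ≠ 0) : ∀ i, p ∣ d i := by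
  classical
  rw [f.as_sum, map_sum] at h
  simp_rw [expand_monomial_smul p hp] at h
  rw [MvPolynomial.coeff_sum] at h
  obtain ⟨b, _, hb⟩ := Finset.exists_ne_zero_of_sum_ne_zero h
  rw [coeff_monomial] at hb
  split_ifs at hb with hh
  · intro i
    rw [← hh]
    exact ⟨b i, rfl⟩
  · exact absurd rfl hb


lemma mv_expand_char (p : ℕ) [Fact p.Prime] [CharP R p] (f : MvPolynomial σ R) :
    map (frobenius R p) (expand p f) = f ^ p := by
  induction f using MvPolynomial.induction_on with
  | C a => rw [expand_C, map_C, frobenius_def, map_pow]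
  | add f g hf hg => rw [map_add, map_add, hf, hg, add_pow_char]
  | mul_X f i hf => rw [map_mul, map_mul, hf, expand_X, map_pow, map_X, mul_pow]

noncomputable def PP (n p : ℕ) : MvPolynomial (Fin (n + 1)) (Polynomial (ZMod p)) :=
  (∑ i : Fin (n + 1), MvPolynomial.X i ^ (n + 1)) -
    MvPolynomial.C (((n : Polynomial (ZMod p)) + 1) * Polynomial.X) *
      ∏ i : Fin (n + 1), MvPolynomial.X i

noncomputable def cvec (n m : ℕ) : Fin (n + 1) →₀ ℕ := Finsupp.equivFunOnFinite.symm fun _ => m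

noncomputable def AA (n p m : ℕ) : Polynomial (ZMod p) := coeff (cvec n m) (PP n p ^ m)

@[simp] lemma cvec_apply (n m : ℕ) (i : Fin (n + 1)) : cvec n m i = m := rfl

lemma cvec_add (n a b : ℕ) : cvec n (a + b) = cvec n a + cvec n b := by
  ext i; simp

lemma cvec_smul (n a b : ℕ) : cvec n (a * b) = a • cvec n b := by
  ext i; simp

lemma PP_hom (n p : ℕ) : (PP n p).IsHomogeneous (n + 1) := by
  have h2 : (∏ i : Fin (n + 1),
      (X i : MvPolynomial (Fin (n + 1)) (Polynomial (ZMod p)))).IsHomogeneous (n + 1) := by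
    have := IsHomogeneous.prod Finset.univ
      (fun i : Fin (n + 1) => (X i : MvPolynomial (Fin (n + 1)) (Polynomial (ZMod p))))
      (fun _ => 1) (fun i _ => isHomogeneous_X _ _)
    simpa using this
  exact IsHomogeneous.sub
    (IsHomogeneous.sum _ _ _ fun i _ => isHomogeneous_X_pow i (n + 1))
    (IsHomogeneous.C_mul h2 _)

lemma degree_eq_sum_univ {N : ℕ} (d : Fin N →₀ ℕ) : d.degree = ∑ i : Fin N, d i :=
  Finset.sum_subset (Finset.subset_univ _) fun i _ hi => Finsupp.notMem_support_iff.mp hi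



lemma cvec_zero (n : ℕ) : cvec n 0 = 0 := by ext i; simp

lemma step (n p : ℕ) (hp : p.Prime) (m : ℕ) :
    AA n p (p - 1 + p * m) = AA n p (p - 1) * AA n p m ^ p := by
  haveI : Fact p.Prime := ⟨hp⟩
  have hp0 : p ≠ 0 := hp.pos.ne'
  set R := Polynomial (ZMod p)
  set P := PP n p with hP
  set φ := frobenius R p with hφ
  have hexp : map φ (expand p (P ^ m)) = (P ^ m) ^ p := mv_expand_char (σ := Fin (n + 1)) (R := R) p (P ^ m)
  have key : P ^ (p - 1 + p * m) = P ^ (p - 1) * map φ (expand p (P ^ m)) := by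
    rw [hexp, ← pow_mul, ← pow_add, mul_comm m p]
  have hGcoeff : coeff (cvec n (p * m)) (map φ (expand p (P ^ m))) = AA n p m ^ p := by
    rw [MvPolynomial.coeff_map, cvec_smul, coeff_expand_smul p hp0, hφ, frobenius_def]
    rfl
  have hhom : (P ^ (p - 1)).IsHomogeneous ((n + 1) * (p - 1)) := (PP_hom n p).pow (p - 1)
  show coeff (cvec n (p - 1 + p * m)) (P ^ (p - 1 + p * m)) = _
  rw [key, MvPolynomial.coeff_mul]
  rw [Finset.sum_eq_single_of_mem (cvec n (p - 1), cvec n (p * m))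
    (Finset.HasAntidiagonal.mem_antidiagonal.mpr (cvec_add n (p - 1) (p * m)).symm) ?h0, hGcoeff]
  case h0 =>
    rintro ⟨a, c⟩ hb hne
    have hbsum : a + c = cvec n (p - 1 + p * m) := Finset.HasAntidiagonal.mem_antidiagonal.mp hb
    by_contra hz
    have ha : coeff a (P ^ (p - 1)) ≠ 0 := fun h => hz (by rw [h, zero_mul])
    have hc : coeff c (map φ (expand p (P ^ m))) ≠ 0 := fun h => hz (by rw [h, mul_zero])
    have hdvd : ∀ i, p ∣ c i := by
      exact coeff_expand_ne_zero p hp0 (P ^ m) c fun h0' =>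
        hc (by rw [MvPolynomial.coeff_map, h0', map_zero])
    have hdeg : a.degree = (n + 1) * (p - 1) := by
      by_contra h
      exact ha (hhom.coeff_eq_zero h)
    have hsum : ∑ i, a i = (n + 1) * (p - 1) := by rw [← degree_eq_sum_univ]; exact hdeg
    have hs : p - 1 + 1 = p := Nat.succ_pred_eq_of_pos hp.pos
    have hge : ∀ i, p - 1 ≤ a i := by
      intro i
      obtain ⟨k, hk⟩ := hdvd i
      have heq : a i + p * k = p - 1 + p * m := by
        have := DFunLike.congr_fun hbsum i
        simp only [Finsupp.add_apply, cvec_apply] at this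
        omega
      rcases le_or_gt k m with h | h
      · have : p * k ≤ p * m := Nat.mul_le_mul_left _ h
        linarith
      · exfalso
        have h3 : p * m + p ≤ p * k := by
          have := Nat.mul_le_mul_left p h
          linarith [Nat.mul_le_mul_left p (Nat.succ_le_of_lt h), mul_add p m 1, mul_one p]
        linarith
    have haeq : a = cvec n (p - 1) := by
      ext i
      rw [cvec_apply]
      by_contra hj
      have hlt : p - 1 < a i := lt_of_le_of_ne (hge i) (Ne.symm hj)
      have hbig : (n + 1) * (p - 1) < ∑ i, a i := by
        have : ∑ _i : Fin (n + 1), (p - 1) = (n + 1) * (p - 1) := by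
          simp [Finset.sum_const, Finset.card_univ]
        rw [← this]
        exact Finset.sum_lt_sum (fun j _ => hge j) ⟨i, Finset.mem_univ i, hlt⟩
      omega
    have hceq : c = cvec n (p * m) := by
      have : cvec n (p - 1) + c = cvec n (p - 1) + cvec n (p * m) := by
        rw [← cvec_add, ← hbsum, haeq]
      exact add_left_cancel this
    exact hne (Prod.ext haeq hceq)
  rfl

lemma AA_pow (n p : ℕ) (hp : p.Prime) (r : ℕ) :
    AA n p (p ^ r - 1) = AA n p (p - 1) ^ ((p ^ r - 1) / (p - 1)) := by
  induction r with
  | zero => simp [AA, cvec_zero]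
  | succ r ih =>
    have hdvd : (p - 1) ∣ (p ^ r - 1) := by simpa using Nat.sub_dvd_pow_sub_pow p 1 r
    set e := (p ^ r - 1) / (p - 1) with he
    have h1 : p ^ r - 1 = (p - 1) * e := (Nat.mul_div_cancel' hdvd).symm
    have hpr : 1 ≤ p ^ r := Nat.one_le_pow _ _ hp.pos
    have hp2 : 2 ≤ p := hp.two_le
    have hstep : p ^ (r + 1) - 1 = p - 1 + p * (p ^ r - 1) := by
      have hps : p ^ (r + 1) = p * p ^ r := by rw [pow_succ, mul_comm]
      set a := p ^ r
      set b := p * a with hb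
      have h2 : p * (a - 1) = b - p := by rw [hb, Nat.mul_sub, mul_one]
      have hbp : p ≤ b := by
        rw [hb]
        exact Nat.le_mul_of_pos_right p (by omega)
      omega
    rw [hstep, step n p hp, ih, ← pow_mul, ← pow_succ']
    congr 1
    have h3 : p ^ (r + 1) - 1 = (p - 1) * (e * p + 1) := by
      rw [hstep, h1]
      ring
    rw [← hstep, h3, Nat.mul_div_cancel_left _ (by omega : 0 < p - 1)]

end Stmt8Aux


/-- over `𝔽_p[t]`, with `A_m` the coefficient of `(X_1⋯X_{n+1})^m`
in `𝒫_t(X)^m`, and `q = p^r`, one has `A_{q−1} = (A_{p−1})^{(q−1)/(p−1)}`. -/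
theorem stmt_8 (n p r : ℕ) (hn : 2 ≤ n) (hp : p.Prime) (hpn : Nat.gcd p (n + 1) = 1)
    (hr : 1 ≤ r) (q : ℕ) (hq : q = p ^ r)
    (A : ℕ → Polynomial (ZMod p))
    (hA : ∀ m, A m =
      MvPolynomial.coeff (Finsupp.equivFunOnFinite.symm fun _ : Fin (n + 1) => m)
        (((∑ i : Fin (n + 1), MvPolynomial.X i ^ (n + 1)) -
            MvPolynomial.C (((n : Polynomial (ZMod p)) + 1) * Polynomial.X) *
              ∏ i : Fin (n + 1), MvPolynomial.X i) ^ m)) :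
    A (q - 1) = (A (p - 1)) ^ ((q - 1) / (p - 1)) := by
  have hAeq : ∀ m, A m = Stmt8Aux.AA n p m := fun m => hA m
  rw [hq, hAeq, hAeq, Stmt8Aux.AA_pow n p hp r]
end

section
/- Let n ≥ 2 and p a prime with gcd(p, n+1) = 1. Let F(x) = ∑_{r≥0} (∏_{i=1}^{n+1} C(ri, i)) (x/(n+1)^{n+1})^r ∈ ℤ_{(p)}[[x]] and H(x) = F^{<p}(x) its truncation to degree ≤ p−1. Let A_{p−1}(t) ∈ ℤ[1/(n+1)][t] be the coefficient of (X_1⋯X_{n+1})^{p−1} in 𝒫_t(X)^{p−1}. Then, as polynomials in t, A_{p−1}(t) ≡ t^{p−1} H(t^{−(n+1)}) (mod p); more precisely, the degree-(p−1) polynomial t^{p−1} H(t^{−(n+1)}) (whose only monomials are t^{p−1−(n+1)i}) is congruent to A_{p−1}(t) mod p. -/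
open MvPolynomial Finset


lemma aux_choose_neg_one (p : ℕ) [hp : Fact p.Prime] :
    ∀ k, k < p → (((p - 1).choose k : ℕ) : ZMod p) = (-1) ^ k := by
  intro k
  induction k with
  | zero => simp
  | succ k ih =>
    intro hk
    have h1 : p.choose (k + 1) = (p - 1).choose k + (p - 1).choose (k + 1) := by
      conv_lhs => rw [← Nat.succ_pred_eq_of_pos hp.out.pos]
      exact Nat.choose_succ_succ _ _
    have h2 : ((p.choose (k + 1) : ℕ) : ZMod p) = 0 := by
      rw [ZMod.natCast_eq_zero_iff]
      exact hp.out.dvd_choose_self (Nat.succ_ne_zero k) hk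
    have h3 := congrArg (Nat.cast : ℕ → ZMod p) h1
    push_cast at h3
    rw [h2, ih (by omega)] at h3
    rw [pow_succ]
    linear_combination -h3

lemma aux_scalar (n p i : ℕ) [hp : Fact p.Prime] (hpn : Nat.gcd p (n + 1) = 1)
    (hle : (n + 1) * i ≤ p - 1) :
    (-1 : ZMod p) ^ ((n + 1) * i + (p - 1)) * ((n : ZMod p) + 1) ^ (p - 1 - (n + 1) * i) *
      (((p - 1).choose ((n + 1) * i) : ℕ) : ZMod p) *
      ((Nat.multinomial Finset.univ (fun _ : Fin (n + 1) => i) : ℕ) : ZMod p) =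
    ((((n + 1) * i).factorial : ℕ) : ZMod p) /
      ((i.factorial : ZMod p) ^ (n + 1) * ((n : ZMod p) + 1) ^ ((n + 1) * i)) := by
  have hppos := hp.out.pos
  set m := (n + 1) * i with hm
  have hmp : m < p := by omega
  have hv' : ¬ p ∣ (n + 1) := (Nat.Prime.coprime_iff_not_dvd hp.out).mp hpn
  have hv : ((n : ZMod p) + 1) ≠ 0 := by
    have : (((n + 1 : ℕ)) : ZMod p) ≠ 0 := by
      rw [Ne, ZMod.natCast_eq_zero_iff]; exact hv'
    push_cast at this; exact this
  have hu : ((i.factorial : ℕ) : ZMod p) ≠ 0 := by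
    rw [Ne, ZMod.natCast_eq_zero_iff, hp.out.dvd_factorial]
    have : i ≤ m := Nat.le_mul_of_pos_left i (Nat.succ_pos n)
    omega
  have hne1 : (-1 : ZMod p) ≠ 0 := neg_ne_zero.mpr one_ne_zero
  have hsign : (-1 : ZMod p) ^ (m + (p - 1)) * (-1) ^ m = 1 := by
    rw [← pow_add, show m + (p - 1) + m = 2 * m + (p - 1) by ring, pow_add, pow_mul]
    norm_num
    exact ZMod.pow_card_sub_one_eq_one hne1
  have hvq : ((n : ZMod p) + 1) ^ (p - 1 - m) * ((n : ZMod p) + 1) ^ m = 1 := by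
    rw [← pow_add, Nat.sub_add_cancel hle, ZMod.pow_card_sub_one_eq_one hv]
  have hmultnat : i.factorial ^ (n + 1) * Nat.multinomial Finset.univ (fun _ : Fin (n + 1) => i)
      = m.factorial := by
    have := Nat.multinomial_spec Finset.univ (fun _ : Fin (n + 1) => i)
    simp only [Finset.prod_const, Finset.sum_const, Finset.card_univ, Fintype.card_fin,
      smul_eq_mul] at this
    rw [hm]
    convert this using 3
  have hmult : ((i.factorial : ZMod p)) ^ (n + 1) *
      ((Nat.multinomial Finset.univ (fun _ : Fin (n + 1) => i) : ℕ) : ZMod p)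
      = ((m.factorial : ℕ) : ZMod p) := by
    exact_mod_cast congrArg (Nat.cast : ℕ → ZMod p) hmultnat
  rw [aux_choose_neg_one p m hmp, eq_div_iff (mul_ne_zero (pow_ne_zero _ hu) (pow_ne_zero _ hv))]
  calc (-1 : ZMod p) ^ (m + (p - 1)) * ((n : ZMod p) + 1) ^ (p - 1 - m) * (-1) ^ m *
        ((Nat.multinomial Finset.univ (fun _ : Fin (n + 1) => i) : ℕ) : ZMod p) *
        ((i.factorial : ZMod p) ^ (n + 1) * ((n : ZMod p) + 1) ^ m)
      = ((-1 : ZMod p) ^ (m + (p - 1)) * (-1) ^ m) *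
        (((n : ZMod p) + 1) ^ (p - 1 - m) * ((n : ZMod p) + 1) ^ m) *
        ((i.factorial : ZMod p) ^ (n + 1) *
          ((Nat.multinomial Finset.univ (fun _ : Fin (n + 1) => i) : ℕ) : ZMod p)) := by ring
    _ = ((m.factorial : ℕ) : ZMod p) := by rw [hsign, hvq, hmult]; ring

lemma aux_prod_X_pow {σ R : Type*} [Fintype σ] [CommSemiring R] (e : σ → ℕ) :
    (∏ i : σ, (MvPolynomial.X i : MvPolynomial σ R) ^ e i) =
      MvPolynomial.monomial (Finsupp.equivFunOnFinite.symm e) 1 := by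
  classical
  rw [← MvPolynomial.prod_X_pow_eq_monomial]
  exact (Finset.prod_subset (Finset.subset_univ _) (fun i _ hi => by
    rw [show e i = 0 from Finsupp.notMem_support_iff.mp hi, pow_zero])).symm

lemma aux_coeff_sum_pow (n : ℕ) {R : Type*} [CommRing R] (m : ℕ) :
    MvPolynomial.coeff (Finsupp.equivFunOnFinite.symm fun _ : Fin (n + 1) => m)
      ((∑ i : Fin (n + 1), MvPolynomial.X i ^ (n + 1) : MvPolynomial (Fin (n + 1)) R) ^ m) =
    if (n + 1) ∣ m then
      ((Nat.multinomial Finset.univ (fun _ : Fin (n + 1) => m / (n + 1)) : ℕ) : R) else 0 := by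
  rw [Finset.sum_pow_eq_sum_piAntidiag, MvPolynomial.coeff_sum]
  have key : ∀ k : Fin (n + 1) → ℕ,
      MvPolynomial.coeff (Finsupp.equivFunOnFinite.symm fun _ : Fin (n + 1) => m)
        ((Nat.multinomial Finset.univ k : MvPolynomial (Fin (n + 1)) R) *
          ∏ i, (MvPolynomial.X i ^ (n + 1)) ^ k i) =
      if (∀ i, (n + 1) * k i = m) then ((Nat.multinomial Finset.univ k : ℕ) : R) else 0 := by
    intro k
    simp_rw [← pow_mul]
    rw [aux_prod_X_pow (fun i => (n + 1) * k i), ← MvPolynomial.C_eq_coe_nat,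
      MvPolynomial.coeff_C_mul, MvPolynomial.coeff_monomial]
    have : (Finsupp.equivFunOnFinite.symm fun i => (n + 1) * k i) =
        (Finsupp.equivFunOnFinite.symm fun _ : Fin (n + 1) => m) ↔ ∀ i, (n + 1) * k i = m := by
      rw [Finsupp.equivFunOnFinite.symm.injective.eq_iff, funext_iff]
    rw [if_congr this rfl rfl]
    split_ifs <;> simp
  simp_rw [key]
  by_cases h : (n + 1) ∣ m
  · obtain ⟨j, rfl⟩ := h
    have hj : (n + 1) * j / (n + 1) = j := Nat.mul_div_cancel_left _ (by omega)
    rw [if_pos ⟨j, rfl⟩, hj]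
    rw [Finset.sum_eq_single (fun _ : Fin (n + 1) => j)]
    · rw [if_pos fun i => rfl]
    · intro k _ hne
      rw [if_neg]
      intro hcond
      exact hne (funext fun i => Nat.eq_of_mul_eq_mul_left (Nat.succ_pos n) (hcond i))
    · intro habs
      exfalso
      apply habs
      rw [Finset.mem_piAntidiag]
      refine ⟨by simp [Finset.sum_const, mul_comm], fun i _ => Finset.mem_univ i⟩
  · rw [if_neg h]
    apply Finset.sum_eq_zero
    intro k _
    rw [if_neg]
    intro hcond
    exact h ⟨k 0, (hcond 0).symm⟩

/-- over `𝔽_p[t]`, the coefficient `A_{p−1}` of `(X_1⋯X_{n+1})^{p−1}`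
in `𝒫_t(X)^{p−1}` equals `t^{p−1} H(t^{−(n+1)})`, i.e. the polynomial
`∑_{i<p} B(i) t^{p−1−(n+1)i}` where `B(i) = ((n+1)i)!/(i!^{n+1}(n+1)^{(n+1)i}) mod p`
are the coefficients of the truncated hypergeometric series `H = F^{<p}`. -/
theorem stmt_9 (n p : ℕ) (hn : 2 ≤ n) [hp : Fact p.Prime] (hpn : Nat.gcd p (n + 1) = 1)
    (B : ℕ → ZMod p)
    (hB : ∀ i, B i = ((((n + 1) * i).factorial : ZMod p)) /
      ((i.factorial : ZMod p) ^ (n + 1) * ((n : ZMod p) + 1) ^ ((n + 1) * i))) :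
    MvPolynomial.coeff (Finsupp.equivFunOnFinite.symm fun _ : Fin (n + 1) => p - 1)
      (((∑ i : Fin (n + 1), MvPolynomial.X i ^ (n + 1)) -
          MvPolynomial.C (((n : Polynomial (ZMod p)) + 1) * Polynomial.X) *
            ∏ i : Fin (n + 1), MvPolynomial.X i) ^ (p - 1)) =
    ∑ i ∈ Finset.range p, Polynomial.C (B i) * Polynomial.X ^ (p - 1 - (n + 1) * i) := by
  classical
  have hppos := hp.out.pos
  set R := Polynomial (ZMod p)
  set q := p - 1 with hqdef
  have hq : q + 1 = p := Nat.succ_pred_eq_of_pos hppos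
  set c : R := ((n : R) + 1) * Polynomial.X with hc
  set d : Fin (n + 1) →₀ ℕ := Finsupp.equivFunOnFinite.symm fun _ : Fin (n + 1) => q with hd
  set S : MvPolynomial (Fin (n + 1)) R := ∑ i : Fin (n + 1), MvPolynomial.X i ^ (n + 1) with hS
  rw [sub_pow, MvPolynomial.coeff_sum]
  have step1 : ∀ m ∈ Finset.range (q + 1),
      MvPolynomial.coeff d ((-1) ^ (m + q) * S ^ m *
        (MvPolynomial.C c * ∏ i : Fin (n + 1), MvPolynomial.X i) ^ (q - m) * (q.choose m : MvPolynomial (Fin (n + 1)) R)) =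
      if (n + 1) ∣ m then
        ((-1 : R) ^ (m + q) * c ^ (q - m) * (q.choose m : R)) *
          ((Nat.multinomial Finset.univ (fun _ : Fin (n + 1) => m / (n + 1)) : ℕ) : R)
      else 0 := by
    intro m hm
    have hmq : m ≤ q := by simpa using Nat.lt_succ_iff.mp (Finset.mem_range.mp hm)
    set ek : Fin (n + 1) →₀ ℕ := Finsupp.equivFunOnFinite.symm fun _ : Fin (n + 1) => q - m
      with hek
    have e1 : (MvPolynomial.C c * ∏ i : Fin (n + 1), MvPolynomial.X i) ^ (q - m) =
        MvPolynomial.C (c ^ (q - m)) * MvPolynomial.monomial ek (1 : R) := by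
      rw [mul_pow, ← MvPolynomial.C_pow, ← Finset.prod_pow,
        aux_prod_X_pow (fun _ : Fin (n + 1) => q - m)]
    have key : (-1) ^ (m + q) * S ^ m *
        (MvPolynomial.C c * ∏ i : Fin (n + 1), MvPolynomial.X i) ^ (q - m) *
        (q.choose m : MvPolynomial (Fin (n + 1)) R) =
        MvPolynomial.C ((-1 : R) ^ (m + q) * c ^ (q - m) * (q.choose m : R)) *
          (S ^ m * MvPolynomial.monomial ek (1 : R)) := by
      rw [e1, ← MvPolynomial.C_eq_coe_nat]
      simp only [map_pow, map_neg, map_one, map_mul, MvPolynomial.C_neg, MvPolynomial.C_1]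
      ring
    rw [key, MvPolynomial.coeff_C_mul, MvPolynomial.coeff_mul_monomial']
    have hekd : ek ≤ d := by
      rw [Finsupp.le_def]
      intro i
      exact Nat.sub_le _ _
    rw [if_pos hekd]
    have hsub : d - ek = Finsupp.equivFunOnFinite.symm fun _ : Fin (n + 1) => m := by
      ext i
      rw [Finsupp.tsub_apply]
      show q - (q - m) = m
      omega
    rw [hsub, aux_coeff_sum_pow n m, mul_one]
    split_ifs <;> ring
  rw [Finset.sum_congr rfl step1, hq, ← Finset.sum_filter]
  have step2 : (∑ i ∈ Finset.range p, Polynomial.C (B i) * Polynomial.X ^ (q - (n + 1) * i)) =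
      ∑ i ∈ (Finset.range p).filter (fun i => (n + 1) * i < p),
        Polynomial.C (B i) * Polynomial.X ^ (q - (n + 1) * i) := by
    symm
    apply Finset.sum_subset (Finset.filter_subset _ _)
    intro i hi hni
    rw [Finset.mem_filter, not_and] at hni
    have hip : ¬ (n + 1) * i < p := hni hi
    have hB0 : B i = 0 := by
      rw [hB i]
      have hz : ((((n + 1) * i).factorial : ℕ) : ZMod p) = 0 := by
        rw [ZMod.natCast_eq_zero_iff]
        exact Nat.dvd_factorial hppos (by omega)
      rw [hz, zero_div]
    rw [hB0, map_zero, zero_mul]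
  rw [step2]
  apply Finset.sum_nbij' (fun m => m / (n + 1)) (fun i => (n + 1) * i)
  · intro m hm
    rw [Finset.mem_filter] at hm ⊢
    obtain ⟨hm1, j, rfl⟩ := hm
    rw [Finset.mem_range] at hm1 ⊢
    rw [Nat.mul_div_cancel_left _ (Nat.succ_pos n)]
    constructor
    · have : j ≤ (n + 1) * j := Nat.le_mul_of_pos_left j (Nat.succ_pos n)
      omega
    · exact hm1
  · intro i hi
    rw [Finset.mem_filter] at hi ⊢
    exact ⟨Finset.mem_range.mpr hi.2, ⟨i, rfl⟩⟩
  · intro m hm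
    rw [Finset.mem_filter] at hm
    obtain ⟨_, j, rfl⟩ := hm
    rw [Nat.mul_div_cancel_left _ (Nat.succ_pos n)]
  · intro i hi
    rw [Nat.mul_div_cancel_left _ (Nat.succ_pos n)]
  · intro m hm
    rw [Finset.mem_filter] at hm
    obtain ⟨hm1, j, rfl⟩ := hm
    rw [Finset.mem_range] at hm1
    rw [Nat.mul_div_cancel_left _ (Nat.succ_pos n)]
    -- per-index identity
    set m := (n + 1) * j with hmj
    have hle : m ≤ q := by omega
    rw [hB j]
    have hcC : ((n : R) + 1) = Polynomial.C ((n : ZMod p) + 1) := by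
      rw [map_add, Polynomial.C_eq_natCast, map_one]
    have hform : ((-1 : R) ^ (m + q) * c ^ (q - m) * (q.choose m : R)) *
        ((Nat.multinomial Finset.univ (fun _ : Fin (n + 1) => j) : ℕ) : R) =
        Polynomial.C ((-1 : ZMod p) ^ (m + q) * ((n : ZMod p) + 1) ^ (q - m) *
            ((q.choose m : ℕ) : ZMod p) *
            ((Nat.multinomial Finset.univ (fun _ : Fin (n + 1) => j) : ℕ) : ZMod p)) *
          Polynomial.X ^ (q - m) := by
      rw [hc, hcC]
      simp only [map_mul, map_pow, map_neg, map_one, Polynomial.C_eq_natCast]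
      ring
    rw [hform, aux_scalar n p j hpn hle]
end

section
/- Let n ≥ 2 and let A_m(t) ∈ ℚ[t] be the coefficient of (X_1⋯X_{n+1})^m in (X_1^{n+1} + ⋯ + X_{n+1}^{n+1} − (n+1)t X_1⋯X_{n+1})^m. Then A_m(t) = (−(n+1)t)^m ∑_{r≥0} C(m, (n+1)r) · ((n+1)r)! / ((−(n+1))^{(n+1)r} (r!)^{n+1}) · t^{−(n+1)r}. -/
open MvPolynomial Finset

lemma sum_single_const {N : ℕ} (e : Fin N → ℕ) :
    (∑ i : Fin N, Finsupp.single i (e i)) = Finsupp.equivFunOnFinite.symm e := by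
  ext j
  simp [Finsupp.single_apply, Finset.sum_ite_eq']

lemma prod_X_pow_const {R : Type*} [CommSemiring R] {N : ℕ} (e : Fin N → ℕ) :
    (∏ i : Fin N, (X i : MvPolynomial (Fin N) R) ^ e i) =
      monomial (Finsupp.equivFunOnFinite.symm e) 1 := by
  simp_rw [X_pow_eq_monomial]
  rw [← monomial_sum_one, sum_single_const]

lemma key_coeff {R : Type*} [CommSemiring R] (n k : ℕ) :
    MvPolynomial.coeff (Finsupp.equivFunOnFinite.symm fun _ : Fin (n+1) => k)
      ((∑ i : Fin (n+1), (X i : MvPolynomial (Fin (n+1)) R) ^ (n+1)) ^ k) =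
    if (n+1) ∣ k then (Nat.multinomial Finset.univ (fun _ : Fin (n+1) => k / (n+1)) : R)
      else 0 := by
  classical
  rw [Finset.sum_pow_eq_sum_piAntidiag, MvPolynomial.coeff_sum]
  have hco : ∀ f : Fin (n+1) → ℕ,
      MvPolynomial.coeff (Finsupp.equivFunOnFinite.symm fun _ : Fin (n+1) => k)
        ((Nat.multinomial Finset.univ f : MvPolynomial (Fin (n+1)) R) *
          ∏ i : Fin (n+1), ((X i : MvPolynomial (Fin (n+1)) R) ^ (n+1)) ^ f i) =
      if (∀ i, (n+1) * f i = k) then (Nat.multinomial Finset.univ f : R) else 0 := by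
    intro f
    simp_rw [← pow_mul, prod_X_pow_const]
    rw [show ((Nat.multinomial Finset.univ f : MvPolynomial (Fin (n+1)) R)) =
        C (Nat.multinomial Finset.univ f : R) by simp]
    rw [MvPolynomial.C_mul_monomial, mul_one, MvPolynomial.coeff_monomial]
    simp only [EmbeddingLike.apply_eq_iff_eq]
    by_cases h : (fun i => (n+1) * f i) = (fun _ : Fin (n+1) => k)
    · rw [if_pos h, if_pos fun i => congrFun h i]
    · rw [if_neg h, if_neg (by intro h'; exact h (funext h'))]
  simp_rw [hco]
  by_cases h : (n+1) ∣ k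
  · obtain ⟨r, rfl⟩ := h
    rw [if_pos ⟨r, rfl⟩]
    rw [Finset.sum_eq_single_of_mem (fun _ : Fin (n+1) => r)]
    · rw [if_pos fun i => rfl, Nat.mul_div_cancel_left r (Nat.succ_pos n)]
    · rw [mem_piAntidiag]
      constructor
      · simp [mul_comm]
      · intro i _; exact Finset.mem_univ i
    · intro f hf hne
      rw [if_neg]
      intro h'
      exact hne (funext fun i => Nat.eq_of_mul_eq_mul_left (Nat.succ_pos n) (h' i))
  · rw [if_neg h]
    apply Finset.sum_eq_zero
    intro f hf
    rw [if_neg]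
    intro h'
    exact h ⟨f 0, (h' 0).symm⟩

lemma mult_cast (n r : ℕ) :
    (Nat.multinomial (Finset.univ : Finset (Fin (n+1))) (fun _ => r) : ℚ) =
      (((n+1) * r).factorial : ℚ) / ((r.factorial : ℚ) ^ (n+1)) := by
  have h := Nat.multinomial_spec (Finset.univ : Finset (Fin (n+1))) (fun _ => r)
  rw [eq_div_iff (by positivity)]
  have h2 : (∏ _i : Fin (n+1), r.factorial) = r.factorial ^ (n+1) := by
    simp [Finset.prod_const]
  have h3 : (∑ _i : Fin (n+1), r) = (n+1) * r := by simp [mul_comm]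
  rw [h2, h3] at h
  exact_mod_cast (mul_comm (Nat.multinomial _ _) (r.factorial ^ (n+1))).trans h

/-- in `ℚ[t, t^{-1}]`,
`A_m(t) = (−(n+1)t)^m ∑_{r≥0} C(m,(n+1)r) ((n+1)r)! / ((−(n+1))^{(n+1)r} (r!)^{n+1}) t^{−(n+1)r}`,
where `A_m(t) ∈ ℚ[t]` is the coefficient of `(X_1⋯X_{n+1})^m` in `𝒫_t(X)^m`. -/
theorem stmt_12 (n m : ℕ) (hn : 2 ≤ n) :
    Polynomial.toLaurent
      (MvPolynomial.coeff (Finsupp.equivFunOnFinite.symm fun _ : Fin (n + 1) => m)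
        (((∑ i : Fin (n + 1), MvPolynomial.X i ^ (n + 1)) -
            MvPolynomial.C (((n : Polynomial ℚ) + 1) * Polynomial.X) *
              ∏ i : Fin (n + 1), MvPolynomial.X i) ^ m)) =
    (LaurentPolynomial.C (-((n : ℚ) + 1)) * LaurentPolynomial.T 1) ^ m *
      ∑ r ∈ Finset.range (m + 1),
        LaurentPolynomial.C
          ((m.choose ((n + 1) * r) : ℚ) * (((n + 1) * r).factorial : ℚ) /
            ((-((n : ℚ) + 1)) ^ ((n + 1) * r) * (r.factorial : ℚ) ^ (n + 1))) *
          LaurentPolynomial.T (-(((n : ℤ) + 1) * r)) := by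
  classical
  rw [sub_pow, MvPolynomial.coeff_sum]
  have hterm : ∀ k ∈ Finset.range (m+1),
      MvPolynomial.coeff (Finsupp.equivFunOnFinite.symm fun _ : Fin (n + 1) => m)
        ((-1) ^ (k + m) * (∑ i : Fin (n + 1), (X i : MvPolynomial (Fin (n+1)) (Polynomial ℚ)) ^ (n + 1)) ^ k *
          (MvPolynomial.C (((n : Polynomial ℚ) + 1) * Polynomial.X) *
            ∏ i : Fin (n + 1), MvPolynomial.X i) ^ (m - k) * (m.choose k : MvPolynomial (Fin (n+1)) (Polynomial ℚ))) =
      Polynomial.C ((-1 : ℚ) ^ (k + m) * ((n : ℚ) + 1) ^ (m - k) * (m.choose k : ℚ) *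
          (if (n+1) ∣ k then (Nat.multinomial Finset.univ (fun _ : Fin (n+1) => k / (n+1)) : ℚ) else 0)) *
        Polynomial.X ^ (m - k) := by
    intro k hk
    have hk' : k ≤ m := by
      rw [Finset.mem_range] at hk; omega
    have hPpow : (∏ i : Fin (n+1), (X i : MvPolynomial (Fin (n+1)) (Polynomial ℚ))) ^ (m - k) =
        monomial (Finsupp.equivFunOnFinite.symm fun _ : Fin (n+1) => m - k) 1 := by
      rw [← Finset.prod_pow]
      exact prod_X_pow_const _
    have hrw : (-1 : MvPolynomial (Fin (n+1)) (Polynomial ℚ)) ^ (k + m) *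
        (∑ i : Fin (n + 1), (X i : MvPolynomial (Fin (n+1)) (Polynomial ℚ)) ^ (n + 1)) ^ k *
          (MvPolynomial.C (((n : Polynomial ℚ) + 1) * Polynomial.X) *
            ∏ i : Fin (n + 1), MvPolynomial.X i) ^ (m - k) * (m.choose k : MvPolynomial (Fin (n+1)) (Polynomial ℚ)) =
        MvPolynomial.C ((-1 : Polynomial ℚ) ^ (k + m) * (((n : Polynomial ℚ) + 1) * Polynomial.X) ^ (m - k) * (m.choose k : Polynomial ℚ)) *
          ((∑ i : Fin (n + 1), (X i : MvPolynomial (Fin (n+1)) (Polynomial ℚ)) ^ (n + 1)) ^ k *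
            monomial (Finsupp.equivFunOnFinite.symm fun _ : Fin (n+1) => m - k) 1) := by
      rw [mul_pow, hPpow]
      simp only [map_mul, map_pow, map_neg, map_one, map_natCast]
      ring
    rw [hrw, MvPolynomial.coeff_C_mul, MvPolynomial.coeff_mul_monomial', if_pos, mul_one]
    · have hsub : (Finsupp.equivFunOnFinite.symm fun _ : Fin (n + 1) => m) -
          (Finsupp.equivFunOnFinite.symm fun _ : Fin (n+1) => m - k) =
          (Finsupp.equivFunOnFinite.symm fun _ : Fin (n+1) => k) := by
        ext i
        simp [Nat.sub_sub_self hk']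
      rw [hsub, key_coeff]
      rw [show (if (n+1) ∣ k then (Nat.multinomial Finset.univ (fun _ : Fin (n+1) => k / (n+1)) : Polynomial ℚ) else 0) =
          Polynomial.C (if (n+1) ∣ k then (Nat.multinomial Finset.univ (fun _ : Fin (n+1) => k / (n+1)) : ℚ) else 0) by
        split <;> simp]
      simp only [mul_pow, map_mul, map_pow, map_neg, map_one, map_add, map_natCast]
      ring
    · intro i
      simp only [Finsupp.coe_equivFunOnFinite_symm]
      omega
  rw [Finset.sum_congr rfl hterm, map_sum]
  simp_rw [Polynomial.toLaurent_C_mul_X_pow]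
  have hpow : (LaurentPolynomial.C (-((n:ℚ)+1)) * LaurentPolynomial.T 1) ^ m =
      LaurentPolynomial.C ((-((n:ℚ)+1)) ^ m) * LaurentPolynomial.T m := by
    rw [mul_pow, ← map_pow, LaurentPolynomial.T_pow, mul_one]
  rw [hpow, Finset.mul_sum]
  have hu : ((n:ℚ)+1) ≠ 0 := by positivity
  have hu' : (-((n:ℚ)+1)) ≠ 0 := neg_ne_zero.mpr hu
  refine Eq.trans (Finset.sum_filter_of_ne (p := fun k => (n+1) ∣ k) ?_).symm
    (Eq.trans ?_ (Finset.sum_filter_of_ne (p := fun r => (n+1)*r ≤ m) ?_))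
  · intro k hk hne
    by_contra hdvd
    apply hne
    rw [if_neg hdvd]
    simp
  rotate_left
  · intro r hr hne
    by_contra hle
    apply hne
    rw [Nat.choose_eq_zero_of_lt (by omega)]
    simp
  refine Finset.sum_nbij' (fun k => k / (n+1)) (fun r => (n+1) * r) ?_ ?_ ?_ ?_ ?_
  · intro k hk
    simp only [Finset.mem_filter, Finset.mem_range] at hk ⊢
    obtain ⟨hk1, r, rfl⟩ := hk
    rw [Nat.mul_div_cancel_left r (show 0 < n+1 by omega)]
    have h2 : r ≤ (n+1)*r := Nat.le_mul_of_pos_left r (by omega)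
    omega
  · intro r hr
    simp only [Finset.mem_filter, Finset.mem_range] at hr ⊢
    exact ⟨by omega, ⟨r, rfl⟩⟩
  · intro k hk
    simp only [Finset.mem_filter, Finset.mem_range] at hk
    exact Nat.mul_div_cancel' hk.2
  · intro r hr
    exact Nat.mul_div_cancel_left r (show 0 < n+1 by omega)
  · intro k hk
    simp only [Finset.mem_filter, Finset.mem_range] at hk
    obtain ⟨hk1, r, rfl⟩ := hk
    have hkm : (n+1) * r ≤ m := by omega
    rw [Nat.mul_div_cancel_left r (show 0 < n+1 by omega),
      if_pos (dvd_mul_right (n+1) r)]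
    beta_reduce
    rw [mult_cast]
    rw [mul_mul_mul_comm, ← map_mul, ← LaurentPolynomial.T_add]
    congr 1
    · congr 1
      have e1 : ((-((n:ℚ)+1))) ^ m = (-((n:ℚ)+1)) ^ (m - (n+1)*r) * (-((n:ℚ)+1)) ^ ((n+1)*r) := by
        rw [← pow_add]; congr 1; omega
      have e2 : ((-((n:ℚ)+1))) ^ (m - (n+1)*r) = (-1:ℚ) ^ (m - (n+1)*r) * ((n:ℚ)+1) ^ (m - (n+1)*r) := by
        rw [neg_pow]
      have e3 : ((-1:ℚ)) ^ ((n+1)*r + m) = (-1:ℚ) ^ (m - (n+1)*r) := by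
        rw [show (n+1)*r + m = (m - (n+1)*r) + 2*((n+1)*r) by omega, pow_add, pow_mul]
        simp
      have hfne : ((r.factorial : ℚ)) ^ (n+1) ≠ 0 := by positivity
      have hpne : ((-((n:ℚ)+1))) ^ ((n+1)*r) ≠ 0 := pow_ne_zero _ hu'
      simp only [← mul_div_assoc]
      rw [div_eq_div_iff hfne (mul_ne_zero hpne hfne), e3, e1, e2]
      ring
    · push_cast [Nat.cast_sub hkm]
      ring
end
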